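/- arXiv:1802.00215 — 3 statements merged into one kernel-verified Lean document; each statement's English description precedes it below -/
import Mathlib

section
/- Suppose W : ℝ → ℝ is piecewise C² with a single jump at 0 (C² away from 0, with one-sided limits of W, W', W'' at 0), and W satisfies W(0+) + W(0-) = 2c with W(0+) ≠ W(0-), and the equation (W(ξ)-c)W'(ξ) + (K'∗W)(ξ) = 0 for all ξ ≠ 0, where K(x) = (1/2)e^{-|x|}. Then W'(0+) + W'(0-) = 0. -/
open MeasureTheory Real Filter Topology Set

/-!
Since `K'` decays exponentially and is continuous off `0`, dominated convergence makes `K' ∗ W`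
continuous, so letting `ξ → 0±` in the profile equation gives
`(W(0±) - c) W'(0±) + (K' ∗ W)(0) = 0` on both sides. The Rankine–Hugoniot condition gives
`W(0-) - c = -(W(0+) - c)`, so subtracting the two identities yields
`(W(0+) - c) (W'(0+) + W'(0-)) = 0`, and `W(0+) - c ≠ 0` because the jump is nontrivial.
-/

lemma integrable_exp_neg_abs : Integrable fun x : ℝ => exp (-|x|) := by
  rw [← integrableOn_univ, ← Iic_union_Ioi (a := (0 : ℝ)), integrableOn_union]
  constructor
  · refine (integrableOn_exp_Iic 0).congr_fun (fun x hx => ?_) measurableSet_Iic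
    rw [abs_of_nonpos hx, neg_neg]
  · refine (exp_neg_integrableOn_Ioi 0 one_pos).congr_fun (fun x hx => ?_) measurableSet_Ioi
    simp [abs_of_pos (mem_Ioi.mp hx)]

lemma exp_neg_abs_sub_le (x y : ℝ) : exp (-|x - y|) ≤ exp |x| * exp (-|y|) := by
  rw [← exp_add, exp_le_exp]
  linarith [abs_sub_abs_le_abs_sub y x, abs_sub_comm x y]

theorem continuous_integral_kernel_mul {K W : ℝ → ℝ} {A C : ℝ} (hKmeas : Measurable K)
    (hKcont : ∀ x ≠ 0, ContinuousAt K x) (hKbd : ∀ x, |K x| ≤ A * exp (-|x|))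
    (hWmeas : Measurable W) (hWbd : ∀ x, |W x| ≤ C) :
    Continuous fun ξ => ∫ y, K (ξ - y) * W y := by
  have hA : 0 ≤ A := by simpa using (abs_nonneg _).trans (hKbd 0)
  have hC : 0 ≤ C := (abs_nonneg _).trans (hWbd 0)
  refine continuous_iff_continuousAt.mpr fun ξ₀ => continuousAt_of_dominated
    (bound := fun y => A * exp (|ξ₀| + 1) * C * exp (-|y|)) ?_ ?_
    ((integrable_exp_neg_abs).const_mul _) ?_
  · exact Eventually.of_forall fun ξ =>
      ((hKmeas.comp (measurable_const.sub measurable_id)).mul hWmeas).aestronglyMeasurable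
  · filter_upwards [eventually_abs_sub_lt ξ₀ one_pos] with ξ hξ
    refine ae_of_all _ fun y => ?_
    have hξ' : |ξ| ≤ |ξ₀| + 1 := by linarith [abs_sub_abs_le_abs_sub ξ ξ₀]
    calc ‖K (ξ - y) * W y‖ = |K (ξ - y)| * |W y| := by rw [Real.norm_eq_abs, abs_mul]
      _ ≤ A * (exp |ξ| * exp (-|y|)) * C :=
          mul_le_mul ((hKbd _).trans (by gcongr; exact exp_neg_abs_sub_le ξ y)) (hWbd y)
            (abs_nonneg _) (by positivity)
      _ ≤ A * (exp (|ξ₀| + 1) * exp (-|y|)) * C := by gcongr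
      _ = A * exp (|ξ₀| + 1) * C * exp (-|y|) := by ring
  · filter_upwards [compl_mem_ae_iff.mpr (measure_singleton ξ₀)] with y hy
    have hy : ξ₀ - y ≠ 0 := sub_ne_zero.mpr (Ne.symm hy)
    exact ((hKcont _ hy).comp (f := fun ξ => ξ - y) (continuous_sub_right y).continuousAt).mul
      continuousAt_const

@[fun_prop]
lemma measurable_realSign : Measurable Real.sign :=
  Measurable.ite (measurableSet_lt measurable_id measurable_const) measurable_const <|
    Measurable.ite (measurableSet_lt measurable_const measurable_id) measurable_const
      measurable_const

lemma continuousAt_realSign_of_ne_zero {x : ℝ} (hx : x ≠ 0) : ContinuousAt Real.sign x := by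
  rcases hx.lt_or_gt with hx | hx
  · refine (continuousAt_const (y := Real.sign x)).congr ?_
    filter_upwards [eventually_lt_nhds hx] with y hy
    rw [sign_of_neg hx, sign_of_neg hy]
  · refine (continuousAt_const (y := Real.sign x)).congr ?_
    filter_upwards [eventually_gt_nhds hx] with y hy
    rw [sign_of_pos hx, sign_of_pos hy]

lemma abs_sign_mul_exp_neg_abs_le (a x : ℝ) :
    |a * Real.sign x * exp (-|x|)| ≤ |a| * exp (-|x|) := by
  rw [abs_mul, abs_mul, abs_of_pos (exp_pos _)]
  gcongr
  rcases sign_apply_eq x with h | h | h <;> simp [h]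

lemma sub_mul_add_eq_zero_of_tendsto {l : Filter ℝ} [l.NeBot] {W D F : ℝ → ℝ} {c w d L : ℝ}
    (hW : Tendsto W l (𝓝 w)) (hD : Tendsto D l (𝓝 d)) (hF : Tendsto F l (𝓝 L))
    (h : ∀ᶠ ξ in l, (W ξ - c) * D ξ + F ξ = 0) : (w - c) * d + L = 0 :=
  tendsto_nhds_unique (((hW.sub_const c).mul hD).add hF)
    (tendsto_const_nhds.congr' (h.mono fun _ hξ => hξ.symm))

theorem one_sided_derivative_condition_general (W K' : ℝ → ℝ)
    (hK' : ∀ x, K' x = -(1 / 2) * Real.sign x * Real.exp (-|x|))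
    (hWmeas : Measurable W) (hWbd : ∃ C, ∀ x, |W x| ≤ C)
    (c wp wm dp dm : ℝ)
    (hwp : Tendsto W (nhdsWithin 0 (Set.Ioi 0)) (nhds wp))
    (hwm : Tendsto W (nhdsWithin 0 (Set.Iio 0)) (nhds wm))
    (hdp : Tendsto (deriv W) (nhdsWithin 0 (Set.Ioi 0)) (nhds dp))
    (hdm : Tendsto (deriv W) (nhdsWithin 0 (Set.Iio 0)) (nhds dm))
    (hRH : wp + wm = 2 * c) (hjump : wp ≠ wm)
    (heq : ∀ ξ : ℝ, ξ ≠ 0 →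
      (W ξ - c) * deriv W ξ + (∫ y : ℝ, K' (ξ - y) * W y) = 0) :
    dp + dm = 0 := by
  obtain ⟨C, hC⟩ := hWbd
  obtain rfl : K' = fun x => -(1 / 2) * Real.sign x * exp (-|x|) := funext hK'
  have hKmeas : Measurable fun x : ℝ => -(1 / 2) * Real.sign x * exp (-|x|) := by fun_prop
  have hKcont (x : ℝ) (hx : x ≠ 0) :
      ContinuousAt (fun x : ℝ => -(1 / 2) * Real.sign x * exp (-|x|)) x := by
    have := continuousAt_realSign_of_ne_zero hx
    fun_prop
  have hconv := (continuous_integral_kernel_mul hKmeas hKcont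
    (abs_sign_mul_exp_neg_abs_le _) hWmeas hC).tendsto 0
  have hplus := sub_mul_add_eq_zero_of_tendsto hwp hdp (hconv.mono_left nhdsWithin_le_nhds)
    (eventually_nhdsWithin_of_forall fun ξ hξ => heq ξ (ne_of_gt hξ))
  have hminus := sub_mul_add_eq_zero_of_tendsto hwm hdm (hconv.mono_left nhdsWithin_le_nhds)
    (eventually_nhdsWithin_of_forall fun ξ hξ => heq ξ (ne_of_lt hξ))
  have hwc : wp - c ≠ 0 := fun h => hjump (by linarith)
  have key : (wp - c) * (dp + dm) = 0 := by linear_combination hplus - hminus + dm * hRH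
  exact (mul_eq_zero.mp key).resolve_left hwc

/-- Suppose `W : ℝ → ℝ` is piecewise `C²` with a single jump at `0`, satisfies the
Rankine-Hugoniot condition `W(0+) + W(0-) = 2c` with `W(0+) ≠ W(0-)`, and satisfies
`(W(ξ)-c)·W'(ξ) + (K'∗W)(ξ) = 0` for all `ξ ≠ 0`, where `K(x) = (1/2)e^{-|x|}`.
Then `W'(0+) + W'(0-) = 0`. -/
theorem one_sided_derivative_condition (W K' : ℝ → ℝ)
    (hK' : ∀ x, K' x = -(1 / 2) * Real.sign x * Real.exp (-|x|))
    (hWsm : ContDiffOn ℝ 2 W {(0 : ℝ)}ᶜ)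
    (hWmeas : Measurable W) (hWbd : ∃ C, ∀ x, |W x| ≤ C)
    (c wp wm dp dm : ℝ)
    (hwp : Tendsto W (nhdsWithin 0 (Set.Ioi 0)) (nhds wp))
    (hwm : Tendsto W (nhdsWithin 0 (Set.Iio 0)) (nhds wm))
    (hdp : Tendsto (deriv W) (nhdsWithin 0 (Set.Ioi 0)) (nhds dp))
    (hdm : Tendsto (deriv W) (nhdsWithin 0 (Set.Iio 0)) (nhds dm))
    (hRH : wp + wm = 2 * c) (hjump : wp ≠ wm)
    (heq : ∀ ξ : ℝ, ξ ≠ 0 →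
      (W ξ - c) * deriv W ξ + (∫ y : ℝ, K' (ξ - y) * W y) = 0) :
    dp + dm = 0 :=
  one_sided_derivative_condition_general W K' hK' hWmeas hWbd c wp wm dp dm hwp hwm hdp hdm hRH
    hjump heq
end

section
/- The function H(U,V) = (U-c)²·(V² - U²/4 + ((3c-4)/6)U + α - c²/4 - c/3) is a first integral of the planar system U' = (U-c)V, V' = -V² + U²/2 + (1-c)U + c²/2 - α; that is, for any C¹ solution (U(z),V(z)), the function z ↦ H(U(z),V(z)) is constant. Equivalently, ∇H(U,V)·F(U,V) = 0 for all (U,V) ∈ ℝ², where F(U,V) = ((U-c)V, -V² + U²/2 + (1-c)U + c²/2 - α). -/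
/-!
Both terms of `∇H · F` carry the factor `(U - c)² V`, and the remaining cofactors cancel
identically, so `∇H · F = 0`; by the chain rule `H` then has zero derivative along every
solution curve.
-/

open ContinuousLinearMap

theorem eq_of_hasFDerivAt_apply_eq_zero {E : Type*} [NormedAddCommGroup E] [NormedSpace ℝ E]
    {H : E → ℝ} {H' : E → E →L[ℝ] ℝ} {F : E → E} (hH : ∀ x, HasFDerivAt H (H' x) x)
    (hF : ∀ x, H' x (F x) = 0) {γ : ℝ → E} (hγ : ∀ t, HasDerivAt γ (F (γ t)) t) (s t : ℝ) :
    H (γ s) = H (γ t) := by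
  have hderiv : ∀ t, HasDerivAt (H ∘ γ) 0 t := fun t => by
    simpa only [hF] using (hH (γ t)).comp_hasDerivAt t (hγ t)
  exact is_const_of_deriv_eq_zero (fun t => (hderiv t).differentiableAt)
    (fun t => (hderiv t).deriv) s t

noncomputable section

namespace FirstIntegral

variable (c α : ℝ)

def vectorField (p : ℝ × ℝ) : ℝ × ℝ :=
  ((p.1 - c) * p.2, -p.2 ^ 2 + p.1 ^ 2 / 2 + (1 - c) * p.1 + c ^ 2 / 2 - α)

def G (p : ℝ × ℝ) : ℝ :=
  p.2 ^ 2 - p.1 ^ 2 / 4 + (3 * c - 4) / 6 * p.1 + α - c ^ 2 / 4 - c / 3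

def H (p : ℝ × ℝ) : ℝ := (p.1 - c) ^ 2 * G c α p

def gradH (p : ℝ × ℝ) : ℝ × ℝ →L[ℝ] ℝ :=
  (2 * (p.1 - c) * G c α p + (p.1 - c) ^ 2 * ((3 * c - 4) / 6 - p.1 / 2)) • fst ℝ ℝ ℝ +
    (2 * (p.1 - c) ^ 2 * p.2) • snd ℝ ℝ ℝ

theorem hasFDerivAt_H (p : ℝ × ℝ) : HasFDerivAt (H c α) (gradH c α p) p := by
  have hfst : HasFDerivAt Prod.fst (fst ℝ ℝ ℝ) p := hasFDerivAt_fst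
  have hsnd : HasFDerivAt Prod.snd (snd ℝ ℝ ℝ) p := hasFDerivAt_snd
  have hG := (((((hsnd.pow 2).sub ((hfst.pow 2).mul_const (1 / 4))).add
    (hfst.const_mul ((3 * c - 4) / 6))).add_const α).sub_const (c ^ 2 / 4)).sub_const (c / 3)
  refine ((((hfst.sub_const c).pow 2).mul hG).congr_fderiv ?_).congr_of_eventuallyEq
    (Filter.Eventually.of_forall fun q => ?_)
  · refine ContinuousLinearMap.ext fun v => ?_
    simp only [gradH, G, add_apply, sub_apply, smul_apply, coe_fst', coe_snd', smul_eq_mul,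
      nsmul_eq_mul, Pi.add_apply, Pi.sub_apply]
    ring
  · simp only [H, G, Pi.mul_apply, Pi.add_apply, Pi.sub_apply]
    ring

theorem gradH_apply_vectorField (p : ℝ × ℝ) : gradH c α p (vectorField c α p) = 0 := by
  simp only [gradH, G, vectorField, add_apply, smul_apply, coe_fst', smul_eq_mul, coe_snd']
  ring

end FirstIntegral

end

/-- `H(U,V) = (U-c)²·(V² - U²/4 + ((3c-4)/6)U + α - c²/4 - c/3)` is a first integral
of the system `U' = (U-c)V`, `V' = -V² + U²/2 + (1-c)U + c²/2 - α`: along any `C¹`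
solution `(U(z), V(z))`, the function `z ↦ H(U(z), V(z))` is constant. -/
theorem first_integral (c α : ℝ) (H : ℝ → ℝ → ℝ)
    (hH : ∀ U V, H U V = (U - c) ^ 2 *
      (V ^ 2 - U ^ 2 / 4 + (3 * c - 4) / 6 * U + α - c ^ 2 / 4 - c / 3))
    (U V : ℝ → ℝ)
    (hU : ∀ z, HasDerivAt U ((U z - c) * V z) z)
    (hV : ∀ z, HasDerivAt V
      (-(V z) ^ 2 + (U z) ^ 2 / 2 + (1 - c) * U z + c ^ 2 / 2 - α) z) :
    ∀ z₁ z₂ : ℝ, H (U z₁) (V z₁) = H (U z₂) (V z₂) := by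
  intro z₁ z₂
  simp only [hH]
  exact eq_of_hasFDerivAt_apply_eq_zero (FirstIntegral.hasFDerivAt_H c α)
    (FirstIntegral.gradH_apply_vectorField c α) (γ := fun z => (U z, V z))
    (fun z => (hU z).prodMk (hV z)) z₁ z₂
end

section
/- Let A ≠ B and suppose W(ξ) = A·H(-ξ) + B·H(ξ) (H the Heaviside function) with K(x) = (1/2)e^{-|x|}. Then W cannot satisfy the distributional equation ∂_ξ((W-c)²/2) + K'∗W = 0 on ℝ for any c ∈ ℝ with W(0+)+W(0-) = 2c: indeed K'∗W(ξ) = (B-A)K(ξ) ≠ 0 for all ξ while (W-c)²/2 is constant away from 0, yielding a contradiction. -/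
/-!
Away from 0, `K'` is the classical derivative of `K`, and `K` vanishes at `±∞`, so the fundamental
theorem of calculus gives `∫_{(-∞, ξ]} K' = K ξ` and `∫_{(ξ, ∞)} K' = -K ξ`. Substituting
`x = ξ - y`, the convolution of `K'` with the step `W` is `A ∫_{(ξ, ∞)} K' + B ∫_{(-∞, ξ]} K'
= (B - A) K ξ`, which never vanishes, whereas `W' = 0` away from the jump.
-/

open MeasureTheory Real Set Filter Topology

/-- The Green function of `1 - ∂ₓ²` on `ℝ`. -/
noncomputable def greenKernel (x : ℝ) : ℝ := 1 / 2 * exp (-|x|)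

noncomputable def greenKernelDeriv (x : ℝ) : ℝ := -(1 / 2) * Real.sign x * exp (-|x|)

theorem greenKernelDeriv_of_neg {x : ℝ} (hx : x < 0) : greenKernelDeriv x = 1 / 2 * exp x := by
  rw [greenKernelDeriv, Real.sign_of_neg hx, abs_of_neg hx, neg_neg]
  ring

theorem greenKernelDeriv_of_pos {x : ℝ} (hx : 0 < x) :
    greenKernelDeriv x = -(1 / 2) * exp (-x) := by
  rw [greenKernelDeriv, Real.sign_of_pos hx, abs_of_pos hx, mul_one]

theorem continuous_greenKernel : Continuous greenKernel := by
  unfold greenKernel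
  fun_prop

theorem hasDerivAt_greenKernel {x : ℝ} (hx : x ≠ 0) :
    HasDerivAt greenKernel (greenKernelDeriv x) x := by
  rcases hx.lt_or_gt with hx | hx
  · refine ((hasDerivAt_abs_neg hx).neg.exp.const_mul (1 / 2)).congr_deriv ?_
    simp [greenKernelDeriv_of_neg hx, abs_of_neg hx]
  · refine ((hasDerivAt_abs_pos hx).neg.exp.const_mul (1 / 2)).congr_deriv ?_
    simp [greenKernelDeriv_of_pos hx, abs_of_pos hx]

theorem tendsto_greenKernel_cocompact : Tendsto greenKernel (cocompact ℝ) (𝓝 0) := by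
  unfold greenKernel
  simpa only [Function.comp_def, norm_eq_abs, mul_zero] using
    (tendsto_exp_atBot.comp (tendsto_neg_atTop_atBot.comp
      (tendsto_norm_cocompact_atTop (E := ℝ)))).const_mul (1 / 2)

theorem integrable_greenKernelDeriv : Integrable greenKernelDeriv := by
  have hneg : IntegrableOn greenKernelDeriv (Iic 0) := by
    rw [integrableOn_Iic_iff_integrableOn_Iio]
    exact IntegrableOn.congr_fun
      (((integrableOn_exp_Iic 0).mono_set Iio_subset_Iic_self).const_mul (1 / 2))
      (fun x hx => (greenKernelDeriv_of_neg hx).symm) measurableSet_Iio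
  have hpos : IntegrableOn greenKernelDeriv (Ioi 0) := by
    refine IntegrableOn.congr_fun ((exp_neg_integrableOn_Ioi 0 one_pos).const_mul (-(1 / 2)))
      (fun x hx => ?_) measurableSet_Ioi
    rw [greenKernelDeriv_of_pos hx, neg_one_mul]
  simpa using hneg.union hpos

theorem integral_Ioi_greenKernelDeriv_of_nonneg {ξ : ℝ} (hξ : 0 ≤ ξ) :
    ∫ x in Ioi ξ, greenKernelDeriv x = -greenKernel ξ := by
  rw [integral_Ioi_of_hasDerivAt_of_tendsto continuous_greenKernel.continuousWithinAt
    (fun x hx => hasDerivAt_greenKernel (hξ.trans_lt hx).ne')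
    integrable_greenKernelDeriv.integrableOn
    (tendsto_greenKernel_cocompact.mono_left atTop_le_cocompact), zero_sub]

theorem integral_Iic_greenKernelDeriv_of_nonpos {ξ : ℝ} (hξ : ξ ≤ 0) :
    ∫ x in Iic ξ, greenKernelDeriv x = greenKernel ξ := by
  rw [integral_Iic_of_hasDerivAt_of_tendsto continuous_greenKernel.continuousWithinAt
    (fun x hx => hasDerivAt_greenKernel (hx.trans_le hξ).ne)
    integrable_greenKernelDeriv.integrableOn
    (tendsto_greenKernel_cocompact.mono_left atBot_le_cocompact), sub_zero]

theorem integral_Iic_add_integral_Ioi_greenKernelDeriv (ξ : ℝ) :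
    (∫ x in Iic ξ, greenKernelDeriv x) + ∫ x in Ioi ξ, greenKernelDeriv x = 0 := by
  rw [intervalIntegral.integral_Iic_add_Ioi integrable_greenKernelDeriv.integrableOn
    integrable_greenKernelDeriv.integrableOn, ← intervalIntegral.integral_Iic_add_Ioi (b := 0)
    integrable_greenKernelDeriv.integrableOn integrable_greenKernelDeriv.integrableOn,
    integral_Iic_greenKernelDeriv_of_nonpos le_rfl,
    integral_Ioi_greenKernelDeriv_of_nonneg le_rfl, add_neg_cancel]

theorem integral_Ioi_greenKernelDeriv (ξ : ℝ) :
    ∫ x in Ioi ξ, greenKernelDeriv x = -greenKernel ξ := by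
  rcases le_or_gt 0 ξ with hξ | hξ
  · exact integral_Ioi_greenKernelDeriv_of_nonneg hξ
  · linarith [integral_Iic_add_integral_Ioi_greenKernelDeriv ξ,
      integral_Iic_greenKernelDeriv_of_nonpos hξ.le]

theorem integral_Iic_greenKernelDeriv (ξ : ℝ) :
    ∫ x in Iic ξ, greenKernelDeriv x = greenKernel ξ := by
  linarith [integral_Iic_add_integral_Ioi_greenKernelDeriv ξ, integral_Ioi_greenKernelDeriv ξ]

theorem integral_comp_sub_mul_step {G : ℝ → ℝ} (hG : Integrable G) (A B ξ : ℝ) :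
    ∫ y, G (ξ - y) * (if y < 0 then A else B) =
      A * (∫ x in Ioi ξ, G x) + B * ∫ x in Iic ξ, G x := by
  rw [← integral_sub_left_eq_self _ volume ξ]
  simp only [sub_sub_cancel, sub_neg]
  have hIic : EqOn (fun x => G x * if ξ < x then A else B) (fun x => B * G x) (Iic ξ) :=
    fun x hx => by simp only [if_neg (not_lt.mpr (mem_Iic.mp hx)), mul_comm]
  have hIoi : EqOn (fun x => G x * if ξ < x then A else B) (fun x => A * G x) (Ioi ξ) :=
    fun x hx => by simp only [if_pos (mem_Ioi.mp hx), mul_comm]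
  rw [← intervalIntegral.integral_Iic_add_Ioi
      (IntegrableOn.congr_fun (hG.integrableOn.const_mul B) hIic.symm measurableSet_Iic)
      (IntegrableOn.congr_fun (hG.integrableOn.const_mul A) hIoi.symm measurableSet_Ioi),
    setIntegral_congr_fun measurableSet_Iic hIic, setIntegral_congr_fun measurableSet_Ioi hIoi,
    integral_const_mul, integral_const_mul, add_comm]

theorem integral_greenKernelDeriv_mul_step (A B ξ : ℝ) :
    ∫ y, greenKernelDeriv (ξ - y) * (if y < 0 then A else B) = (B - A) * greenKernel ξ := by
  rw [integral_comp_sub_mul_step integrable_greenKernelDeriv, integral_Ioi_greenKernelDeriv,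
    integral_Iic_greenKernelDeriv]
  ring

theorem greenKernel_pos (x : ℝ) : 0 < greenKernel x := by
  unfold greenKernel
  positivity

theorem deriv_step_of_ne_zero (A B : ℝ) {ξ : ℝ} (hξ : ξ ≠ 0) :
    deriv (fun y : ℝ => if y < 0 then A else B) ξ = 0 := by
  rcases hξ.lt_or_gt with hξ | hξ
  · have hA : (fun y : ℝ => if y < 0 then A else B) =ᶠ[𝓝 ξ] fun _ => A :=
      eventuallyEq_of_mem (Iio_mem_nhds hξ) fun y hy => if_pos hy
    rw [hA.deriv_eq, deriv_const]
  · have hB : (fun y : ℝ => if y < 0 then A else B) =ᶠ[𝓝 ξ] fun _ => B :=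
      eventuallyEq_of_mem (Ioi_mem_nhds hξ) fun y hy => if_neg (not_lt.mpr (le_of_lt hy))
    rw [hB.deriv_eq, deriv_const]

/-- A piecewise constant profile `W = A·H(-ξ) + B·H(ξ)` with `A ≠ B` cannot yield
a weak traveling wave: one has `(K'∗W)(ξ) = (B-A)·K(ξ) ≠ 0` for all `ξ`, so the
equation `(W(ξ)-c)·W'(ξ) + (K'∗W)(ξ) = 0` for all `ξ ≠ 0` fails for every `c`. -/
theorem no_piecewise_constant_wave (A B : ℝ) (hAB : A ≠ B)
    (W K K' : ℝ → ℝ)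
    (hW : ∀ ξ, W ξ = if ξ < 0 then A else B)
    (hK : ∀ x, K x = (1 / 2) * Real.exp (-|x|))
    (hK' : ∀ x, K' x = -(1 / 2) * Real.sign x * Real.exp (-|x|)) :
    (∀ ξ : ℝ, (∫ y : ℝ, K' (ξ - y) * W y) = (B - A) * K ξ) ∧
      (∀ ξ : ℝ, (B - A) * K ξ ≠ 0) ∧
      ∀ c : ℝ, ¬ (∀ ξ : ℝ, ξ ≠ 0 →
        (W ξ - c) * deriv W ξ + (∫ y : ℝ, K' (ξ - y) * W y) = 0) := by
  obtain rfl : W = fun ξ => if ξ < 0 then A else B := funext hW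
  obtain rfl : K = greenKernel := funext hK
  obtain rfl : K' = greenKernelDeriv := funext hK'
  have hconv := integral_greenKernelDeriv_mul_step A B
  have hne : ∀ ξ, (B - A) * greenKernel ξ ≠ 0 := fun ξ =>
    mul_ne_zero (sub_ne_zero.mpr hAB.symm) (greenKernel_pos ξ).ne'
  refine ⟨hconv, hne, fun c hc => hne 1 ?_⟩
  have h1 := hc 1 one_ne_zero
  simp only [deriv_step_of_ne_zero A B one_ne_zero, mul_zero, zero_add, hconv] at h1
  exact h1
end
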